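/- Let Φ be the linear functional on ℚ(q)[z] with Φ([n,z choose n]_q) = 1/(-q^2;q)_n, and let P_{0,n}(z) be the specialized big q-Jacobi polynomials with ℓ = 0. Then Φ(P_{0,n}(z)) = 0 for every n ≥ 1. -/

import Mathlib

open Finset Polynomial

noncomputable def q : RatFunc ℚ := RatFunc.X

/-- q-integer `[k]_q = (1-q^k)/(1-q)` for `k : ℤ`. -/
noncomputable def qint (k : ℤ) : RatFunc ℚ := (1 - q ^ k) / (1 - q)

/-- q-factorial `[n]_q!`. -/
noncomputable def qfact (n : ℕ) : RatFunc ℚ := ∏ m ∈ Finset.range n, qint (m + 1)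

/-- q-Pochhammer `(A;Q)_n`. -/
noncomputable def qPoch (Q A : RatFunc ℚ) (n : ℕ) : RatFunc ℚ :=
  ∏ j ∈ Finset.range n, (1 - A * Q ^ j)

/-- The generalized q-binomial polynomial `[m, z choose n]_q`. -/
noncomputable def qbinomPoly (m n : ℕ) : Polynomial (RatFunc ℚ) :=
  Polynomial.C (qfact n)⁻¹ *
    ∏ k ∈ Finset.Icc ((m : ℤ) - n + 1) (m : ℤ),
      (Polynomial.C (qint k) + Polynomial.C (q ^ k) * Polynomial.X)

/-- The polynomial `(q(1-(1-q)z); q)_k` in the variable `z`. -/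
noncomputable def pochPoly (k : ℕ) : Polynomial (RatFunc ℚ) :=
  ∏ j ∈ Finset.range k,
    (1 - Polynomial.C q * (1 - Polynomial.C (1 - q) * Polynomial.X) * Polynomial.C q ^ j)

/-- The specialized (rescaled, shifted) big q-Jacobi polynomials `P_{ℓ,n}(z)`. -/
noncomputable def bigP (ℓ n : ℕ) : Polynomial (RatFunc ℚ) :=
  Polynomial.C ((-1) ^ n * qPoch q (q ^ (ℓ + 1)) n /
      (q ^ n * (1 - q) ^ n * qPoch q (-q ^ (n + ℓ + 1)) n)) *
    ∑ k ∈ Finset.range (n + 1),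
      Polynomial.C (qPoch q (q ^ (-(n : ℤ))) k * qPoch q (-q ^ (n + ℓ + 1)) k * q ^ k /
          (qPoch q q k * qPoch q (q ^ (ℓ + 1)) k)) * pochPoly k

/-! Φ sends `(q(1-(1-q)z);q)_k = (q;q)_k [k,z choose k]_q` to `(q;q)_k / (-q²;q)_k`, so
`Φ(P_{0,n})` is a multiple of the terminating balanced series `₂φ₁(q⁻ⁿ, -qⁿ⁺¹; -q²; q, q)`.
Balanced (`c = abq`) terminating `₂φ₁`-sums telescope: the partial sum up to `m` is
`(aq;q)_m (bq;q)_m / ((q;q)_m (abq;q)_m)`, and for `a = q⁻ⁿ`, `m = n` the factor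
`(q^{1-n};q)_n` vanishes. -/

section Pochhammer

variable (Q : RatFunc ℚ)

theorem qPoch_succ (A : RatFunc ℚ) (k : ℕ) :
    qPoch Q A (k + 1) = qPoch Q A k * (1 - A * Q ^ k) := prod_range_succ _ _

theorem qPoch_succ' (A : RatFunc ℚ) (k : ℕ) :
    qPoch Q A (k + 1) = (1 - A) * qPoch Q (A * Q) k := by
  rw [qPoch, prod_range_succ', mul_comm]
  congr 1
  · simp
  · exact prod_congr rfl fun j _ => by ring

theorem qPoch_inv_pow_succ {Q : RatFunc ℚ} (hQ : Q ≠ 0) (k : ℕ) :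
    qPoch Q (Q ^ k)⁻¹ (k + 1) = 0 := by
  rw [qPoch_succ, inv_mul_cancel₀ (pow_ne_zero k hQ), sub_self, mul_zero]

theorem sum_range_qPoch_balanced (a b : RatFunc ℚ) (m : ℕ) (hQ : qPoch Q Q m ≠ 0)
    (hab : qPoch Q (a * b * Q) m ≠ 0) :
    ∑ k ∈ range (m + 1), qPoch Q a k * qPoch Q b k * Q ^ k / (qPoch Q Q k * qPoch Q (a * b * Q) k)
      = qPoch Q (a * Q) m * qPoch Q (b * Q) m / (qPoch Q Q m * qPoch Q (a * b * Q) m) := by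
  induction m with
  | zero => simp [qPoch]
  | succ m ih =>
    rw [qPoch_succ] at hQ hab
    obtain ⟨hQm, -⟩ := mul_ne_zero_iff.mp hQ
    obtain ⟨habm, -⟩ := mul_ne_zero_iff.mp hab
    rw [sum_range_succ, ih hQm habm, qPoch_succ' Q a, qPoch_succ' Q b, qPoch_succ Q (a * Q),
      qPoch_succ Q (b * Q), qPoch_succ Q Q, qPoch_succ Q (a * b * Q),
      div_add_div _ _ (mul_ne_zero hQm habm) (mul_ne_zero hQ hab),
      div_eq_div_iff (mul_ne_zero (mul_ne_zero hQm habm) (mul_ne_zero hQ hab)) (mul_ne_zero hQ hab)]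
    ring

end Pochhammer

theorem one_sub_C_mul_q_pow_ne_zero (c : ℚ) {m : ℕ} (hm : m ≠ 0) :
    1 - RatFunc.C c * q ^ m ≠ 0 := by
  have h : 1 - RatFunc.C c * q ^ m = algebraMap ℚ[X] (RatFunc ℚ) (1 - C c * X ^ m) := by
    simp [q, RatFunc.algebraMap_C, RatFunc.algebraMap_X]
  rw [h]
  refine RatFunc.algebraMap_ne_zero fun hp => ?_
  simpa [coeff_X_pow, hm.symm] using congrArg (coeff · 0) hp

theorem qPoch_C_mul_q_pow_ne_zero (c : ℚ) {m : ℕ} (hm : m ≠ 0) (n : ℕ) :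
    qPoch q (RatFunc.C c * q ^ m) n ≠ 0 :=
  prod_ne_zero_iff.mpr fun j _ => by
    simpa [mul_assoc, pow_add] using one_sub_C_mul_q_pow_ne_zero c (m := m + j) (by omega)

theorem qPoch_q_ne_zero (n : ℕ) : qPoch q q n ≠ 0 := by
  simpa using qPoch_C_mul_q_pow_ne_zero 1 one_ne_zero n

theorem qPoch_neg_q_sq_ne_zero (n : ℕ) : qPoch q (-q ^ 2) n ≠ 0 := by
  simpa using qPoch_C_mul_q_pow_ne_zero (-1) two_ne_zero n

theorem prod_Icc_one_eq_prod_range {M : Type*} [CommMonoid M] (f : ℤ → M) (k : ℕ) :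
    ∏ i ∈ Icc (1 : ℤ) k, f i = ∏ j ∈ range k, f (j + 1) := by
  have h : Icc (1 : ℤ) k = (range k).image fun j : ℕ => (j : ℤ) + 1 := by
    ext x
    simp only [mem_Icc, mem_image, mem_range]
    constructor
    · intro h; exact ⟨(x - 1).toNat, by omega, by omega⟩
    · rintro ⟨a, h, rfl⟩; omega
  rw [h, prod_image fun a _ b _ h => by simpa using h]

theorem one_sub_q_mul_qint (k : ℕ) : (1 - q) * qint k = 1 - q ^ k := by
  have h : (1 : RatFunc ℚ) - q ≠ 0 := by
    simpa using one_sub_C_mul_q_pow_ne_zero 1 one_ne_zero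
  rw [qint, zpow_natCast, mul_div_cancel₀ _ h]

theorem qPoch_q_eq_one_sub_q_pow_mul_qfact (k : ℕ) : qPoch q q k = (1 - q) ^ k * qfact k := by
  have h := pow_card_mul_prod (s := range k) (f := fun m : ℕ => qint (m + 1)) (b := 1 - q)
  rw [card_range] at h
  rw [qfact, h]
  refine prod_congr rfl fun j _ => ?_
  rw [← Nat.cast_succ, one_sub_q_mul_qint, pow_succ']

theorem pochPoly_eq_C_mul_qbinomPoly (k : ℕ) :
    pochPoly k = C (qPoch q q k) * qbinomPoly k k := by
  have hfactor (j : ℕ) : 1 - C q * (1 - C (1 - q) * X) * C q ^ j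
      = C (1 - q) * (C (qint (j + 1)) + C (q ^ ((j : ℤ) + 1)) * X) := by
    rw [mul_add, ← C_mul, ← Nat.cast_succ, one_sub_q_mul_qint, zpow_natCast]
    simp only [map_sub, map_one, map_pow, Nat.succ_eq_add_one]
    ring
  have hfact : qfact k ≠ 0 := right_ne_zero_of_mul <|
    qPoch_q_eq_one_sub_q_pow_mul_qfact k ▸ qPoch_q_ne_zero k
  rw [pochPoly, qbinomPoly, sub_self, zero_add, prod_Icc_one_eq_prod_range,
    prod_congr rfl fun j _ => hfactor j, prod_mul_distrib, prod_const, card_range, ← mul_assoc,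
    ← C_mul, qPoch_q_eq_one_sub_q_pow_mul_qfact, mul_inv_cancel_right₀ hfact, C_pow]

section Functional

variable {Φ : Polynomial (RatFunc ℚ) →ₗ[RatFunc ℚ] RatFunc ℚ}

theorem map_pochPoly (hΦ : ∀ n : ℕ, Φ (qbinomPoly n n) = (qPoch q (-q ^ 2) n)⁻¹) (k : ℕ) :
    Φ (pochPoly k) = qPoch q q k / qPoch q (-q ^ 2) k := by
  rw [pochPoly_eq_C_mul_qbinomPoly, ← smul_eq_C_mul, map_smul, hΦ, smul_eq_mul, div_eq_mul_inv]

theorem map_bigP_zero (hΦ : ∀ n : ℕ, Φ (qbinomPoly n n) = (qPoch q (-q ^ 2) n)⁻¹) (n : ℕ) :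
    Φ (bigP 0 n) = (-1) ^ n * qPoch q q n / (q ^ n * (1 - q) ^ n * qPoch q (-q ^ (n + 1)) n) *
      ∑ k ∈ range (n + 1), qPoch q (q ^ (-(n : ℤ))) k * qPoch q (-q ^ (n + 1)) k * q ^ k /
        (qPoch q q k * qPoch q (-q ^ 2) k) := by
  simp only [bigP, add_zero, zero_add, pow_one]
  rw [← smul_eq_C_mul, map_smul, map_sum, smul_eq_mul]
  congr 1
  refine sum_congr rfl fun k _ => ?_
  have hq := qPoch_q_ne_zero k
  have hq2 := qPoch_neg_q_sq_ne_zero k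
  rw [← smul_eq_C_mul, map_smul, map_pochPoly hΦ, smul_eq_mul]
  field_simp

end Functional

theorem Phi_bigP_zero (Φ : Polynomial (RatFunc ℚ) →ₗ[RatFunc ℚ] RatFunc ℚ)
    (hΦ : ∀ n : ℕ, Φ (qbinomPoly n n) = (qPoch q (-q ^ 2) n)⁻¹) :
    ∀ n : ℕ, 1 ≤ n → Φ (bigP 0 n) = 0 := by
  intro n hn
  obtain ⟨m, rfl⟩ : ∃ m, n = m + 1 := ⟨n - 1, by omega⟩
  have hq : q ≠ 0 := RatFunc.X_ne_zero
  have hab : q ^ (-((m + 1 : ℕ) : ℤ)) * -q ^ (m + 1 + 1) * q = -q ^ 2 := by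
    rw [zpow_neg, zpow_natCast]
    field_simp
    ring
  have ha : q ^ (-((m + 1 : ℕ) : ℤ)) * q = (q ^ m)⁻¹ := by
    rw [zpow_neg, zpow_natCast, pow_succ, mul_inv, inv_mul_cancel_right₀ hq]
  rw [map_bigP_zero hΦ, ← hab,
    sum_range_qPoch_balanced q _ _ _ (qPoch_q_ne_zero _) (hab ▸ qPoch_neg_q_sq_ne_zero _), ha,
    qPoch_inv_pow_succ hq, zero_mul, zero_div, mul_zero]
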